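/- Let n ≥ 2, q = n/(n−1), and β = ∏_{k=0}^{∞} (1 − 1/(q^k + 1)) = ∏_{k=0}^{∞} 1/(1 + (1/q)^k). Then the infinite product converges and e^{−n} ≤ β ≤ e^{−n/2}; in particular 0 < β < 1. -/

import Mathlib

/-!
Writing `r = 1/q = (n-1)/n`, the `k`-th factor is `1/(1 + rᵏ) = exp (-log (1 + rᵏ))`, so
`β = exp (-∑ log (1 + rᵏ))`. Since `x/2 ≤ log (1 + x) ≤ x` on `[0, 1]`, the exponent lies
between half of and all of the geometric sum `∑ rᵏ = 1/(1 - r) = n`.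
-/

open Manifold Metric Filter
open scoped RealInnerProductSpace Topology

noncomputable section

/-- The norm of a vector of `ℝ^k` (helper, used to take norms of values of `mfderiv`,
whose codomain `TangentSpace 𝓘(ℝ, ℝ^k) y` is definitionally `ℝ^k`). -/
def vnorm {k : ℕ} (v : EuclideanSpace ℝ (Fin k)) : ℝ := ‖v‖

/-- The real inner product of two vectors of `ℝ^k` (helper, as for `vnorm`). -/
def iprod {k : ℕ} (a b : EuclideanSpace ℝ (Fin k)) : ℝ := ⟪a, b⟫

open Real

lemma half_le_log_one_add {x : ℝ} (hx0 : 0 ≤ x) (hx1 : x ≤ 1) : x / 2 ≤ log (1 + x) := by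
  refine le_trans ?_ (le_log_one_add_of_nonneg hx0)
  rw [div_le_div_iff₀ two_pos (by linarith)]
  nlinarith

lemma log_one_add_le_self {x : ℝ} (hx : -1 < x) : log (1 + x) ≤ x :=
  (log_le_sub_one_of_pos (by linarith)).trans_eq (add_sub_cancel_left 1 x)

section GeometricProduct

variable {r : ℝ}

lemma summable_log_one_add_pow (hr0 : 0 ≤ r) (hr1 : r < 1) :
    Summable fun k : ℕ => log (1 + r ^ k) :=
  summable_log_one_add_of_summable (summable_geometric_of_lt_one hr0 hr1)

lemma tsum_log_one_add_pow_le (hr0 : 0 ≤ r) (hr1 : r < 1) :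
    ∑' k : ℕ, log (1 + r ^ k) ≤ (1 - r)⁻¹ := by
  rw [← tsum_geometric_of_lt_one hr0 hr1]
  exact (summable_log_one_add_pow hr0 hr1).tsum_le_tsum
    (fun k => log_one_add_le_self (by linarith [pow_nonneg hr0 k]))
    (summable_geometric_of_lt_one hr0 hr1)

lemma half_inv_one_sub_le_tsum_log_one_add_pow (hr0 : 0 ≤ r) (hr1 : r < 1) :
    (1 - r)⁻¹ / 2 ≤ ∑' k : ℕ, log (1 + r ^ k) := by
  rw [← tsum_geometric_of_lt_one hr0 hr1, ← tsum_div_const]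
  exact ((summable_geometric_of_lt_one hr0 hr1).div_const 2).tsum_le_tsum
    (fun k => half_le_log_one_add (pow_nonneg hr0 k) (pow_le_one₀ hr0 hr1.le))
    (summable_log_one_add_pow hr0 hr1)

lemma hasProd_one_div_one_add_pow (hr0 : 0 ≤ r) (hr1 : r < 1) :
    HasProd (fun k : ℕ => 1 / (1 + r ^ k)) (exp (-∑' k : ℕ, log (1 + r ^ k))) := by
  refine hasProd_of_hasSum_log (fun k => by positivity) ?_
  simpa only [one_div, log_inv] using (summable_log_one_add_pow hr0 hr1).hasSum.neg

end GeometricProduct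

lemma one_sub_one_div_add_one {x : ℝ} (hx : 0 < x) : 1 - 1 / (x + 1) = 1 / (1 + 1 / x) := by
  field_simp
  ring

/-- **The Moser-iteration exponent.**  Let `n ≥ 2`, `q = n/(n-1)`, and
`β = ∏_{k=0}^∞ (1 - 1/(qᵏ+1)) = ∏_{k=0}^∞ 1/(1+(1/q)ᵏ)`.  Then the infinite product
converges and `e^{-n} ≤ β ≤ e^{-n/2}`; in particular `0 < β < 1`. -/
theorem moser_product_bounds (n : ℕ) (hn : 2 ≤ n) (q : ℝ)
    (hq : q = (n : ℝ) / ((n : ℝ) - 1)) :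
    Multipliable (fun k : ℕ => 1 - 1 / (q ^ k + 1)) ∧
    (∏' k : ℕ, (1 - 1 / (q ^ k + 1))) = ∏' k : ℕ, 1 / (1 + (1 / q) ^ k) ∧
    Real.exp (-(n : ℝ)) ≤ ∏' k : ℕ, (1 - 1 / (q ^ k + 1)) ∧
    (∏' k : ℕ, (1 - 1 / (q ^ k + 1))) ≤ Real.exp (-(n : ℝ) / 2) ∧
    0 < ∏' k : ℕ, (1 - 1 / (q ^ k + 1)) ∧
    (∏' k : ℕ, (1 - 1 / (q ^ k + 1))) < 1 := by
  have hn2 : (2 : ℝ) ≤ n := by exact_mod_cast hn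
  have hq1 : 1 < q := by rw [hq, one_lt_div (by linarith)]; linarith
  have hr0 : 0 ≤ 1 / q := by positivity
  have hr1 : 1 / q < 1 := (div_lt_one (by linarith)).mpr hq1
  have hgeom : (1 - 1 / q)⁻¹ = n := by rw [hq]; field_simp; ring
  have hfactor : (fun k : ℕ => 1 - 1 / (q ^ k + 1)) = fun k => 1 / (1 + (1 / q) ^ k) := by
    funext k
    rw [one_div_pow, one_sub_one_div_add_one (by positivity)]
  have hprod := hasProd_one_div_one_add_pow hr0 hr1
  have hupper := tsum_log_one_add_pow_le hr0 hr1
  have hlower := half_inv_one_sub_le_tsum_log_one_add_pow hr0 hr1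
  rw [hgeom] at hupper hlower
  rw [hfactor, hprod.tprod_eq]
  refine ⟨hprod.multipliable, rfl, ?_, ?_, exp_pos _, ?_⟩
  · exact exp_le_exp.mpr (by linarith)
  · exact exp_le_exp.mpr (by linarith)
  · exact exp_lt_one_iff.mpr (by linarith)
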